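/- Let θ > 0 satisfy θ = √(2e) · cosh(θ/4). Then the function u(t) = -2 · log( cosh((t - 1/2) · θ/2) / cosh(θ/4) ) satisfies u''(t) + exp(u(t) + 1) = 0 for all t ∈ [0,1], together with the boundary conditions u(0) = 0 and u(1) = 0. -/

import Mathlib

open Real Set

/-! For any `a, c` and `k ≠ 0`, `u s = -2 log (cosh ((s - c) a) / k)` has
`u'' = -2a² / cosh² ((s - c) a) = -(2a²/k²) exp u`, so it solves Liouville's equation
`u'' + (2a²/k²) exp u = 0`. With `a = θ/2`, `c = 1/2`, `k = cosh (θ/4)` the root condition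
`θ² = 2e cosh² (θ/4)` makes the coefficient equal to `e`, which is Bratu's equation
`u'' + exp (u + 1) = 0`; at `t = 0, 1` the argument `(t - 1/2) θ/2` is `∓θ/4`, where `u` vanishes
because `cosh` is even. -/

theorem Real.hasDerivAt_tanh (x : ℝ) : HasDerivAt tanh (1 / cosh x ^ 2) x := by
  have h := (hasDerivAt_sinh x).div (hasDerivAt_cosh x) (cosh_pos x).ne'
  have htanh : sinh / cosh = tanh := funext fun y => (tanh_eq_sinh_div_cosh y).symm
  rwa [htanh, ← sq, ← sq, cosh_sq_sub_sinh_sq] at h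

theorem Real.exp_neg_two_mul_log {z : ℝ} (hz : z ≠ 0) : exp (-2 * log z) = (z ^ 2)⁻¹ := by
  have h := exp_nat_mul (log z) 2
  push_cast at h
  rw [neg_mul, exp_neg, h, exp_log_eq_abs hz, sq_abs]

section Liouville

variable (a c k : ℝ)

theorem hasDerivAt_sub_const_mul_const (s : ℝ) : HasDerivAt (fun s => (s - c) * a) a s := by
  simpa using ((hasDerivAt_id s).sub_const c).mul_const a

theorem hasDerivAt_neg_two_mul_log_cosh_div (hk : k ≠ 0) (s : ℝ) :
    HasDerivAt (fun s => -2 * log (cosh ((s - c) * a) / k))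
      (-(2 * a) * tanh ((s - c) * a)) s := by
  have h := (((hasDerivAt_sub_const_mul_const a c s).cosh.div_const k).log
    (div_ne_zero (cosh_pos _).ne' hk)).const_mul (-2)
  refine h.congr_deriv ?_
  rw [tanh_eq_sinh_div_cosh]
  field_simp

theorem deriv_deriv_neg_two_mul_log_cosh_div (hk : k ≠ 0) (s : ℝ) :
    deriv (deriv fun s => -2 * log (cosh ((s - c) * a) / k)) s
      = -(2 * a ^ 2) / cosh ((s - c) * a) ^ 2 := by
  have hderiv : deriv (fun s => -2 * log (cosh ((s - c) * a) / k))
      = fun s => -(2 * a) * tanh ((s - c) * a) :=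
    funext fun s => (hasDerivAt_neg_two_mul_log_cosh_div a c k hk s).deriv
  have htanh : HasDerivAt (fun s => -(2 * a) * tanh ((s - c) * a))
      (-(2 * a) * (1 / cosh ((s - c) * a) ^ 2 * a)) s :=
    ((hasDerivAt_tanh _).comp s (hasDerivAt_sub_const_mul_const a c s)).const_mul _
  rw [hderiv, htanh.deriv]
  ring

theorem liouville_neg_two_mul_log_cosh_div (hk : k ≠ 0) (s : ℝ) :
    deriv (deriv fun s => -2 * log (cosh ((s - c) * a) / k)) s
      + 2 * a ^ 2 / k ^ 2 * exp (-2 * log (cosh ((s - c) * a) / k)) = 0 := by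
  rw [deriv_deriv_neg_two_mul_log_cosh_div a c k hk,
    exp_neg_two_mul_log (div_ne_zero (cosh_pos _).ne' hk)]
  field_simp
  ring

end Liouville

theorem bratu_solution_general (θ : ℝ)
    (hroot : θ = Real.sqrt (2 * Real.exp 1) * Real.cosh (θ / 4)) :
    (∀ t ∈ Icc (0:ℝ) 1,
      deriv (deriv (fun s => -2 * Real.log (Real.cosh ((s - 1/2) * (θ/2)) / Real.cosh (θ/4)))) t
        + Real.exp ((-2 * Real.log (Real.cosh ((t - 1/2) * (θ/2)) / Real.cosh (θ/4))) + 1) = 0) ∧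
    -2 * Real.log (Real.cosh (((0:ℝ) - 1/2) * (θ/2)) / Real.cosh (θ/4)) = 0 ∧
    -2 * Real.log (Real.cosh (((1:ℝ) - 1/2) * (θ/2)) / Real.cosh (θ/4)) = 0 := by
  have hk : cosh (θ / 4) ≠ 0 := (cosh_pos _).ne'
  have hcoef : 2 * (θ / 2) ^ 2 / cosh (θ / 4) ^ 2 = exp 1 := by
    have hsq : θ ^ 2 = 2 * exp 1 * cosh (θ / 4) ^ 2 := by
      conv_lhs => rw [hroot]
      rw [mul_pow, sq_sqrt (by positivity)]
    field_simp
    linarith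
  refine ⟨fun t _ => ?_, ?_, ?_⟩
  · have h := liouville_neg_two_mul_log_cosh_div (θ / 2) (1 / 2) (cosh (θ / 4)) hk t
    rw [hcoef] at h
    rw [exp_add]
    linarith
  · rw [show ((0:ℝ) - 1/2) * (θ/2) = -(θ / 4) by ring, cosh_neg, div_self hk, log_one, mul_zero]
  · rw [show ((1:ℝ) - 1/2) * (θ/2) = θ / 4 by ring, div_self hk, log_one, mul_zero]

/-- If `θ > 0` satisfies `θ = √(2e) cosh(θ/4)`, then
`u(t) = -2 log( cosh((t-1/2) θ/2) / cosh(θ/4) )` solves the Bratu problem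
`u'' + exp(u + 1) = 0` on `[0,1]` with `u 0 = 0` and `u 1 = 0`. -/
theorem bratu_solution (θ : ℝ) (hθ : 0 < θ)
    (hroot : θ = Real.sqrt (2 * Real.exp 1) * Real.cosh (θ / 4)) :
    (∀ t ∈ Icc (0:ℝ) 1,
      deriv (deriv (fun s => -2 * Real.log (Real.cosh ((s - 1/2) * (θ/2)) / Real.cosh (θ/4)))) t
        + Real.exp ((-2 * Real.log (Real.cosh ((t - 1/2) * (θ/2)) / Real.cosh (θ/4))) + 1) = 0) ∧
    -2 * Real.log (Real.cosh (((0:ℝ) - 1/2) * (θ/2)) / Real.cosh (θ/4)) = 0 ∧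
    -2 * Real.log (Real.cosh (((1:ℝ) - 1/2) * (θ/2)) / Real.cosh (θ/4)) = 0 :=
  bratu_solution_general θ hroot
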